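/- Every positive bounded linear operator T : c₀ → c₀ extends uniquely to a positive order continuous bounded linear operator S on ℓ∞. Moreover, ‖T‖ = ‖S‖ = ‖S𝟙‖ = lim_{N→∞} ‖T 𝟙_{{1,…,N}}‖ = ‖sup_{N∈ℕ} T 𝟙_{{1,…,N}}‖, where 𝟙 is the constant-one sequence and 𝟙_{{1,…,N}} is the indicator sequence of the first N coordinates. -/

import Mathlib

/-!
`T` is given by the nonnegative matrix `a k n = T (single n) k`, whose partial row sums are the
values `T 𝟙_{[0,N)} k ≤ ‖T‖`; the same matrix defines `S` on `ℓ∞`, and order continuity of `S` is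
dominated convergence in each row. A positive order continuous extension is determined on `x ≥ 0`
by the tails `x - 𝟙_{[0,N)} x`, which decrease to `0`, hence everywhere. Positivity gives
`‖S‖ = ‖S 𝟙‖`, and `S 𝟙` is the pointwise supremum of the `T 𝟙_{[0,N)}`.
-/

open Filter BoundedContinuousFunction ZeroAtInftyContinuousMap
open scoped ZeroAtInfty

/-- A bounded linear operator `S` on `ℓ∞` (modelled as `ℕ →ᵇ ℝ`) is order continuous if
for every decreasing net in `ℓ∞` with infimum `0` the image net has infimum `0`. -/
def IsOrderContinuousOp (S : (ℕ →ᵇ ℝ) →L[ℝ] (ℕ →ᵇ ℝ)) : Prop :=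
  ∀ (ι : Type) (p : Preorder ι), Nonempty ι →
    (∀ i j : ι, ∃ k : ι, p.le i k ∧ p.le j k) →
    ∀ x : ι → (ℕ →ᵇ ℝ), (∀ i j : ι, p.le i j → x j ≤ x i) →
      IsGLB (Set.range x) 0 → IsGLB (Set.range fun i => S (x i)) 0

open Set Topology
open scoped NNReal

namespace BoundedContinuousFunction

variable {α : Type*} [TopologicalSpace α]

theorem le_def {f g : α →ᵇ ℝ} : f ≤ g ↔ ∀ x, f x ≤ g x := Iff.rfl

theorem isLUB_range_of_forall_isLUB_apply {ι : Type*} {f : ι → α →ᵇ ℝ} {g : α →ᵇ ℝ}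
    (h : ∀ x, IsLUB (range fun i => f i x) (g x)) : IsLUB (range f) g := by
  refine ⟨?_, fun b hb x => (h x).2 ?_⟩
  · rintro _ ⟨i, rfl⟩ x
    exact (h x).1 ⟨i, rfl⟩
  · rintro _ ⟨i, rfl⟩
    exact hb ⟨i, rfl⟩ x

theorem isGLB_range_of_forall_isGLB_apply {ι : Type*} {f : ι → α →ᵇ ℝ} {g : α →ᵇ ℝ}
    (h : ∀ x, IsGLB (range fun i => f i x) (g x)) : IsGLB (range f) g := by
  refine ⟨?_, fun b hb x => (h x).2 ?_⟩
  · rintro _ ⟨i, rfl⟩ x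
    exact (h x).1 ⟨i, rfl⟩
  · rintro _ ⟨i, rfl⟩
    exact hb ⟨i, rfl⟩ x

/-- A positive lower bound at one point would give a positive bump below every member. -/
theorem isGLB_range_zero_iff_forall_apply [DiscreteTopology α] {ι : Type*} {f : ι → α →ᵇ ℝ} :
    IsGLB (range f) 0 ↔ ∀ x, IsGLB (range fun i => f i x) 0 := by
  refine ⟨fun h x => ⟨?_, fun c hc => ?_⟩, fun h => isGLB_range_of_forall_isGLB_apply h⟩
  · rintro _ ⟨i, rfl⟩
    exact h.1 ⟨i, rfl⟩ x
  · let bump : α →ᵇ ℝ :=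
      ofNormedAddCommGroupDiscrete (({x} : Set α).indicator fun _ => max c 0) (max c 0) fun y =>
        (norm_indicator_le_norm_self _ y).trans (abs_of_nonneg (le_max_right c 0)).le
    have hbump : bump ∈ lowerBounds (range f) := by
      rintro _ ⟨i, rfl⟩ y
      by_cases hy : y = x
      · subst hy
        simpa [bump] using ⟨hc ⟨i, rfl⟩, h.1 ⟨i, rfl⟩ y⟩
      · simpa [bump, hy] using h.1 ⟨i, rfl⟩ y
    simpa [bump] using h.2 hbump x

theorem norm_le_norm_of_nonneg_of_le {f g : α →ᵇ ℝ} (hf : 0 ≤ f) (hfg : f ≤ g) :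
    ‖f‖ ≤ ‖g‖ :=
  norm_le_norm_of_abs_le_abs <| by rwa [abs_of_nonneg hf, abs_of_nonneg (hf.trans hfg)]

theorem tendsto_norm_of_isLUB {ι : Type*} [Preorder ι] [Nonempty ι] {u : ι → α →ᵇ ℝ}
    {g : α →ᵇ ℝ} (hu : Monotone u) (hu0 : ∀ i, 0 ≤ u i) (hg : IsLUB (range u) g) :
    Tendsto (fun i => ‖u i‖) atTop (𝓝 ‖g‖) := by
  obtain ⟨i₀⟩ := ‹Nonempty ι›
  have hg0 : 0 ≤ g := (hu0 i₀).trans (hg.1 ⟨i₀, rfl⟩)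
  refine tendsto_atTop_isLUB (fun i j hij => norm_le_norm_of_nonneg_of_le (hu0 i) (hu hij))
    ⟨?_, fun b hb => ?_⟩
  · rintro _ ⟨i, rfl⟩
    exact norm_le_norm_of_nonneg_of_le (hu0 i) (hg.1 ⟨i, rfl⟩)
  · have hb0 : 0 ≤ b := (norm_nonneg _).trans (hb ⟨i₀, rfl⟩)
    have hconst : const α b ∈ upperBounds (range u) := by
      rintro _ ⟨i, rfl⟩ x
      exact ((u i).apply_le_norm x).trans (hb ⟨i, rfl⟩)
    refine (norm_le hb0).2 fun x => ?_
    rw [Real.norm_of_nonneg (le_def.1 hg0 x)]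
    simpa using le_def.1 (hg.2 hconst) x

theorem norm_apply_one_eq_opNorm {β : Type*} [TopologicalSpace β]
    (S : (α →ᵇ ℝ) →L[ℝ] (β →ᵇ ℝ)) (hS : ∀ x, 0 ≤ x → 0 ≤ S x) :
    ‖S (const α 1)‖ = ‖S‖ := by
  refine le_antisymm ((S.le_opNorm _).trans ?_) (S.opNorm_le_bound (norm_nonneg _) fun x => ?_)
  · simpa using mul_le_of_le_one_right (norm_nonneg S) ((norm_const_le (1 : ℝ)).trans norm_one.le)
  have hmono := (monotone_iff_map_nonneg S).2 hS
  have hup := le_def.1 (hmono (le_def.2 fun y => by simpa using x.apply_le_norm y :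
    x ≤ ‖x‖ • const α 1))
  have hlo := le_def.1 (hmono (le_def.2 fun y => by simpa using x.neg_norm_le_apply y :
    -(‖x‖ • const α 1) ≤ x))
  refine (norm_le (by positivity)).2 fun y => ?_
  simp only [map_neg, map_smul, coe_neg, coe_smul, Pi.neg_apply, smul_eq_mul] at hup hlo
  calc ‖S x y‖ ≤ ‖x‖ * S (const α 1) y := abs_le.2 ⟨hlo y, hup y⟩
    _ ≤ ‖S (const α 1)‖ * ‖x‖ := by
      rw [mul_comm]; gcongr; exact (S (const α 1)).apply_le_norm y

theorem summable_mul_apply {f : α → ℝ} (hf : Summable f) (x : α →ᵇ ℝ) :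
    Summable fun n => f n * x n :=
  Summable.of_norm_bounded (hf.norm.mul_right ‖x‖) fun n => by
    rw [norm_mul]; gcongr; exact x.norm_coe_le_norm n

theorem norm_tsum_mul_apply_le {f : α → ℝ} (hf : Summable f) (x : α →ᵇ ℝ) :
    ‖∑' n, f n * x n‖ ≤ (∑' n, ‖f n‖) * ‖x‖ := by
  refine (norm_tsum_le_tsum_norm (summable_mul_apply hf x).norm).trans ?_
  rw [← tsum_mul_right]
  refine (summable_mul_apply hf x).norm.tsum_le_tsum (fun n => ?_) (hf.norm.mul_right ‖x‖)
  rw [norm_mul]; gcongr; exact x.norm_coe_le_norm n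

end BoundedContinuousFunction

section MatrixOp

variable {α β : Type*} [TopologicalSpace α] [DiscreteTopology α] [TopologicalSpace β]

noncomputable def matrixOp (a : α → β → ℝ) (ha : ∀ k, Summable (a k)) (C : ℝ≥0)
    (hC : ∀ k, ∑' n, ‖a k n‖ ≤ C) : (β →ᵇ ℝ) →L[ℝ] (α →ᵇ ℝ) :=
  LinearMap.mkContinuous
    { toFun x := ofNormedAddCommGroupDiscrete (fun k => ∑' n, a k n * x n) (C * ‖x‖) fun k =>
        (norm_tsum_mul_apply_le (ha k) x).trans (by gcongr; exact hC k)
      map_add' x y := by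
        ext k
        simp [mul_add, (summable_mul_apply (ha k) x).tsum_add (summable_mul_apply (ha k) y)]
      map_smul' c x := by
        ext k
        simp [← tsum_mul_left, mul_left_comm] }
    C fun x => (norm_le (by positivity)).2 fun k =>
      (norm_tsum_mul_apply_le (ha k) x).trans (by gcongr; exact hC k)

variable {a : α → β → ℝ} {ha : ∀ k, Summable (a k)} {C : ℝ≥0} {hC : ∀ k, ∑' n, ‖a k n‖ ≤ C}

theorem norm_matrixOp_le : ‖matrixOp a ha C hC‖ ≤ C :=
  LinearMap.mkContinuous_norm_le _ C.2 _

theorem matrixOp_nonneg (hpos : ∀ k n, 0 ≤ a k n) {x : β →ᵇ ℝ} (hx : 0 ≤ x) :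
    0 ≤ matrixOp a ha C hC x :=
  le_def.2 fun k => tsum_nonneg fun n => mul_nonneg (hpos k n) (le_def.1 hx n)

/-- Tannery's theorem, row by row. -/
theorem tendsto_matrixOp_apply {ι : Type*} {l : Filter ι} {x : ι → β →ᵇ ℝ} {M : ℝ}
    (hx : ∀ n, Tendsto (fun i => x i n) l (𝓝 0)) (hM : ∀ᶠ i in l, ‖x i‖ ≤ M) (k : α) :
    Tendsto (fun i => matrixOp a ha C hC (x i) k) l (𝓝 0) := by
  have h := tendsto_tsum_of_dominated_convergence (f := fun i n => a k n * x i n)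
    (g := fun _ => (0 : ℝ)) ((ha k).norm.mul_right M)
    (fun n => by simpa using (hx n).const_mul (a k n))
    (hM.mono fun i hi n => by rw [norm_mul]; gcongr; exact (x i).norm_coe_le_norm n |>.trans hi)
  rwa [tsum_zero] at h

end MatrixOp

theorem isOrderContinuousOp_matrixOp {a : ℕ → ℕ → ℝ} {ha : ∀ k, Summable (a k)} {C : ℝ≥0}
    {hC : ∀ k, ∑' n, ‖a k n‖ ≤ C} (hpos : ∀ k n, 0 ≤ a k n) :
    IsOrderContinuousOp (matrixOp a ha C hC) := by
  intro ι _ _ hdir x hanti hglb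
  have : IsDirectedOrder ι := ⟨hdir⟩
  obtain ⟨i₀⟩ := ‹Nonempty ι›
  have hx0 : ∀ i, 0 ≤ x i := fun i => hglb.1 ⟨i, rfl⟩
  have hlim : ∀ n, Tendsto (fun i => x i n) atTop (𝓝 0) := fun n =>
    tendsto_atTop_isGLB (fun i j hij => le_def.1 (hanti i j hij) n)
      (isGLB_range_zero_iff_forall_apply.1 hglb n)
  have hbdd : ∀ᶠ i in atTop, ‖x i‖ ≤ ‖x i₀‖ :=
    (eventually_ge_atTop i₀).mono fun i hi => norm_le_norm_of_nonneg_of_le (hx0 i) (hanti _ _ hi)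
  refine isGLB_range_zero_iff_forall_apply.2 fun k => ⟨?_, fun b hb =>
    ge_of_tendsto' (tendsto_matrixOp_apply hlim hbdd k) fun i => hb ⟨i, rfl⟩⟩
  rintro _ ⟨i, rfl⟩
  exact le_def.1 (matrixOp_nonneg hpos (hx0 i)) k

namespace ZeroAtInftyContinuousMap

theorem apply_le_norm {α : Type*} [TopologicalSpace α] (y : C₀(α, ℝ)) (k : α) : y k ≤ ‖y‖ :=
  norm_toBCF_eq_norm (f := y) ▸ y.toBCF.apply_le_norm k

def ofEventuallyZero (f : ℕ → ℝ) (hf : ∀ᶠ k in atTop, f k = 0) : C₀(ℕ, ℝ) where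
  toFun := f
  continuous_toFun := continuous_of_discreteTopology
  zero_at_infty' := by
    rw [cocompact_eq_atTop]
    exact tendsto_const_nhds.congr' (hf.mono fun _ h => h.symm)

def single (n : ℕ) : C₀(ℕ, ℝ) :=
  ofEventuallyZero (fun k => if k = n then 1 else 0)
    ((eventually_gt_atTop n).mono fun _ hk => if_neg hk.ne')

def truncation (x : ℕ → ℝ) (N : ℕ) : C₀(ℕ, ℝ) :=
  ofEventuallyZero (fun k => if k < N then x k else 0)
    ((eventually_ge_atTop N).mono fun _ hk => if_neg hk.not_gt)

@[simp] theorem single_apply (n k : ℕ) : single n k = if k = n then 1 else 0 := rfl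

@[simp] theorem truncation_apply (x : ℕ → ℝ) (N k : ℕ) :
    truncation x N k = if k < N then x k else 0 := rfl

theorem truncation_zero (x : ℕ → ℝ) : truncation x 0 = 0 := by
  ext k; simp

theorem truncation_succ (x : ℕ → ℝ) (N : ℕ) :
    truncation x (N + 1) = truncation x N + x N • single N := by
  ext k
  simp only [truncation_apply, single_apply, add_apply, smul_apply, smul_eq_mul]
  split_ifs <;> first | omega | simp_all

theorem norm_truncation_one_le (N : ℕ) : ‖truncation 1 N‖ ≤ 1 := by
  rw [← norm_toBCF_eq_norm]
  refine (norm_le zero_le_one).2 fun k => ?_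
  simp only [toBCF_apply, truncation_apply, Pi.one_apply]
  split_ifs <;> simp

theorem tendsto_truncation (x : C₀(ℕ, ℝ)) : Tendsto (truncation x) atTop (𝓝 x) := by
  rw [tendsto_iff_tendstoUniformly, Metric.tendstoUniformly_iff]
  intro ε hε
  have hx : Tendsto x atTop (𝓝 0) := cocompact_eq_atTop (α := ℕ) ▸ zero_at_infty x
  obtain ⟨M, hM⟩ := eventually_atTop.1 (Metric.tendsto_nhds.1 hx ε hε)
  filter_upwards [eventually_ge_atTop M] with N hN k
  rw [truncation_apply]
  split_ifs with hk
  · simpa using hε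
  · simpa [dist_comm] using hM k (hN.trans (not_lt.1 hk))

end ZeroAtInftyContinuousMap

namespace C0Operator

open Finset

variable (T : C₀(ℕ, ℝ) →L[ℝ] C₀(ℕ, ℝ))

noncomputable def matrixEntry (k n : ℕ) : ℝ := T (single n) k

theorem apply_truncation (x : ℕ → ℝ) (N k : ℕ) :
    T (truncation x N) k = ∑ n ∈ range N, matrixEntry T k n * x n := by
  induction N with
  | zero => simp [truncation_zero]
  | succ N ih =>
    rw [truncation_succ, map_add, map_smul, ZeroAtInftyContinuousMap.add_apply,
      ZeroAtInftyContinuousMap.smul_apply, ih, sum_range_succ, smul_eq_mul, mul_comm, matrixEntry]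

theorem apply_truncation_one (N k : ℕ) :
    T (truncation 1 N) k = ∑ n ∈ range N, matrixEntry T k n := by
  simp [apply_truncation]

theorem sum_range_matrixEntry_le (k N : ℕ) : ∑ n ∈ range N, matrixEntry T k n ≤ ‖T‖ := by
  rw [← apply_truncation_one]
  calc T (truncation 1 N) k ≤ ‖T (truncation 1 N)‖ := apply_le_norm _ k
    _ ≤ ‖T‖ * ‖truncation 1 N‖ := T.le_opNorm _
    _ ≤ ‖T‖ := mul_le_of_le_one_right (norm_nonneg T) (norm_truncation_one_le N)

/-- The tails `x - truncation x N` decrease to `0`, hence so do their images under `S`. -/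
theorem tendsto_apply_truncation {S : (ℕ →ᵇ ℝ) →L[ℝ] (ℕ →ᵇ ℝ)}
    (hpos : ∀ x, 0 ≤ x → 0 ≤ S x) (hoc : IsOrderContinuousOp S)
    (hext : ∀ x : C₀(ℕ, ℝ), S x.toBCF = (T x).toBCF) {x : ℕ →ᵇ ℝ} (hx : 0 ≤ x) (k : ℕ) :
    Tendsto (fun N => T (truncation x N) k) atTop (𝓝 (S x k)) := by
  set y : ℕ → ℕ →ᵇ ℝ := fun N => x - (truncation x N).toBCF
  have hy : ∀ N m, y N m = if m < N then 0 else x m := fun N m => by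
    simp only [y, BoundedContinuousFunction.coe_sub, Pi.sub_apply, toBCF_apply,
      truncation_apply]
    split_ifs <;> simp
  have hanti : Antitone y := fun N M h => le_def.2 fun m => by
    simp only [hy]
    split_ifs <;> first | omega | exact le_rfl | exact le_def.1 hx m
  have hglb : IsGLB (range y) 0 := isGLB_range_zero_iff_forall_apply.2 fun m =>
    IsLeast.isGLB ⟨⟨m + 1, by simp [hy]⟩, by
      rintro _ ⟨N, rfl⟩
      simp only [hy]
      split_ifs
      exacts [le_rfl, le_def.1 hx m]⟩
  have hSy : Tendsto (fun N => S (y N) k) atTop (𝓝 0) :=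
    tendsto_atTop_isGLB (fun _ _ h => le_def.1 ((monotone_iff_map_nonneg S).2 hpos (hanti h)) k)
      (isGLB_range_zero_iff_forall_apply.1 (hoc ℕ inferInstance ⟨0⟩
        (fun i j => ⟨max i j, le_max_left i j, le_max_right i j⟩) y (fun _ _ h => hanti h)
        hglb) k)
  have hTS : ∀ N, T (truncation x N) k = S x k - S (y N) k := fun N => by
    simp [y, map_sub, hext]
  simpa [hTS] using (tendsto_const_nhds (x := S x k)).sub hSy

variable {T} (hT : ∀ x : C₀(ℕ, ℝ), (∀ k, 0 ≤ x k) → ∀ k, 0 ≤ T x k)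
include hT

theorem matrixEntry_nonneg (k n : ℕ) : 0 ≤ matrixEntry T k n :=
  hT _ (fun m => by simp only [single_apply]; split_ifs <;> norm_num) k

theorem monotone_sum_range_matrixEntry (k : ℕ) :
    Monotone fun N => ∑ n ∈ range N, matrixEntry T k n := fun _ _ h =>
  sum_le_sum_of_subset_of_nonneg (range_mono h) fun n _ _ => matrixEntry_nonneg hT k n

theorem summable_matrixEntry (k : ℕ) : Summable (matrixEntry T k) :=
  summable_of_sum_range_le (matrixEntry_nonneg hT k) (sum_range_matrixEntry_le T k)

theorem tsum_norm_matrixEntry_le (k : ℕ) : ∑' n, ‖matrixEntry T k n‖ ≤ ‖T‖₊ := by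
  simp_rw [Real.norm_of_nonneg (matrixEntry_nonneg hT k _)]
  exact (summable_matrixEntry hT k).tsum_le_of_sum_range_le (sum_range_matrixEntry_le T k)

noncomputable def extension : (ℕ →ᵇ ℝ) →L[ℝ] (ℕ →ᵇ ℝ) :=
  matrixOp (matrixEntry T) (summable_matrixEntry hT) ‖T‖₊ (tsum_norm_matrixEntry_le hT)

theorem extension_apply (x : ℕ →ᵇ ℝ) (k : ℕ) :
    extension hT x k = ∑' n, matrixEntry T k n * x n := rfl

theorem extension_nonneg (x : ℕ →ᵇ ℝ) (hx : 0 ≤ x) : 0 ≤ extension hT x :=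
  matrixOp_nonneg (matrixEntry_nonneg hT) hx

theorem isOrderContinuousOp_extension : IsOrderContinuousOp (extension hT) :=
  isOrderContinuousOp_matrixOp (matrixEntry_nonneg hT)

theorem extension_toBCF (x : C₀(ℕ, ℝ)) : extension hT x.toBCF = (T x).toBCF := by
  ext k
  have hsum : Tendsto (fun N => T (truncation x N) k) atTop (𝓝 (extension hT x.toBCF k)) := by
    simpa only [apply_truncation, extension_apply, toBCF_apply] using
      (summable_mul_apply (summable_matrixEntry hT k) x.toBCF).hasSum.tendsto_sum_nat
  exact tendsto_nhds_unique hsum <| (tendsto_iff_tendstoUniformly.1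
    ((T.continuous.tendsto x).comp (tendsto_truncation x))).tendsto_at k

theorem eq_extension {S : (ℕ →ᵇ ℝ) →L[ℝ] (ℕ →ᵇ ℝ)} (hpos : ∀ x, 0 ≤ x → 0 ≤ S x)
    (hoc : IsOrderContinuousOp S) (hext : ∀ x : C₀(ℕ, ℝ), S x.toBCF = (T x).toBCF) :
    S = extension hT := by
  have hcone : ∀ x, 0 ≤ x → S x = extension hT x := fun x hx => ext fun k =>
    tendsto_nhds_unique (tendsto_apply_truncation T hpos hoc hext hx k)
      (tendsto_apply_truncation T (extension_nonneg hT) (isOrderContinuousOp_extension hT)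
        (extension_toBCF hT) hx k)
  ext1 x
  rw [← posPart_sub_negPart x, map_sub, map_sub, hcone _ (posPart_nonneg x),
    hcone _ (negPart_nonneg x)]

theorem norm_extension : ‖extension hT‖ = ‖T‖ := by
  refine le_antisymm norm_matrixOp_le
    (T.opNorm_le_bound (norm_nonneg (extension hT)) fun x => ?_)
  rw [← norm_toBCF_eq_norm, ← extension_toBCF hT, ← norm_toBCF_eq_norm (f := x)]
  exact (extension hT).le_opNorm _

theorem isLUB_toBCF_truncation_one :
    IsLUB (range fun N => (T (truncation 1 N)).toBCF) (extension hT (const ℕ 1)) :=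
  isLUB_range_of_forall_isLUB_apply fun k => by
    simp only [toBCF_apply, apply_truncation_one, extension_apply, const_apply, mul_one]
    exact isLUB_of_tendsto_atTop (monotone_sum_range_matrixEntry hT k)
      (summable_matrixEntry hT k).hasSum.tendsto_sum_nat

theorem monotone_toBCF_truncation_one : Monotone fun N => (T (truncation 1 N)).toBCF :=
  fun _ _ h => le_def.2 fun k => by
    simpa only [toBCF_apply, apply_truncation_one] using monotone_sum_range_matrixEntry hT k h

theorem toBCF_truncation_one_nonneg (N : ℕ) : 0 ≤ (T (truncation 1 N)).toBCF :=
  le_def.2 fun k => by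
    simpa only [toBCF_apply, apply_truncation_one, BoundedContinuousFunction.coe_zero,
      Pi.zero_apply] using sum_nonneg fun n _ => matrixEntry_nonneg hT k n

end C0Operator

open C0Operator in
theorem positive_operator_on_c0_extends_uniquely_to_linfty
    (T : C₀(ℕ, ℝ) →L[ℝ] C₀(ℕ, ℝ))
    (hT : ∀ x : C₀(ℕ, ℝ), (∀ k : ℕ, 0 ≤ x k) → ∀ k : ℕ, 0 ≤ T x k)
    (χ : ℕ → C₀(ℕ, ℝ)) (hχ : ∀ N k : ℕ, χ N k = if k < N then 1 else 0) :
    ∃ S : (ℕ →ᵇ ℝ) →L[ℝ] (ℕ →ᵇ ℝ),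
      ((∀ x : ℕ →ᵇ ℝ, 0 ≤ x → 0 ≤ S x) ∧ IsOrderContinuousOp S ∧
        ∀ x : C₀(ℕ, ℝ), S x.toBCF = (T x).toBCF) ∧
      (∀ S' : (ℕ →ᵇ ℝ) →L[ℝ] (ℕ →ᵇ ℝ),
        ((∀ x : ℕ →ᵇ ℝ, 0 ≤ x → 0 ≤ S' x) ∧ IsOrderContinuousOp S' ∧
          ∀ x : C₀(ℕ, ℝ), S' x.toBCF = (T x).toBCF) → S' = S) ∧
      ‖S‖ = ‖T‖ ∧
      ‖S (BoundedContinuousFunction.const ℕ (1 : ℝ))‖ = ‖T‖ ∧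
      Tendsto (fun N : ℕ => ‖T (χ N)‖) atTop (nhds ‖T‖) ∧
      (∀ g : ℕ →ᵇ ℝ, IsLUB (Set.range fun N : ℕ => (T (χ N)).toBCF) g → ‖g‖ = ‖T‖) := by
  obtain rfl : χ = truncation 1 := funext fun N => ext fun k => hχ N k
  have hone : ‖extension hT (const ℕ 1)‖ = ‖T‖ :=
    (norm_apply_one_eq_opNorm _ (extension_nonneg hT)).trans (norm_extension hT)
  refine ⟨extension hT, ⟨extension_nonneg hT, isOrderContinuousOp_extension hT,
    extension_toBCF hT⟩, fun S' ⟨hpos, hoc, hext⟩ => eq_extension hT hpos hoc hext,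
    norm_extension hT, hone, ?_, fun g hg => ?_⟩
  · simp_rw [← norm_toBCF_eq_norm (f := T _), ← hone]
    exact tendsto_norm_of_isLUB (monotone_toBCF_truncation_one hT)
      (toBCF_truncation_one_nonneg hT) (isLUB_toBCF_truncation_one hT)
  · rw [hg.unique (isLUB_toBCF_truncation_one hT), hone]
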